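/- arXiv:2510.05078 — 8 statements merged into one kernel-verified Lean document; each statement's English description precedes it below -/
import Mathlib

section
/- Let (X,d) be a compact metric space with a finite Borel measure μ. If a surjective self-mapping ψ: X → X is 1-Lipschitz (d(ψ(x),ψ(y)) ≤ d(x,y) for all x,y) and measure-contracting (μ(A) ≤ μ(ψ⁻¹(A)) for every Borel set A), then ψ is a bijective isometry and is measure-preserving (μ(ψ⁻¹(A)) = μ(A) for every Borel set A). -/
/-!
Every point of a compact metric space is recurrent under a surjective 1-Lipschitz self-map `g`:
a right inverse of `g` gives a backward orbit, two terms of which are `ε`-close by compactness,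
and pushing them forward by the same iterate of `g` brings one of them back to the starting
point. Applied to `ψ × ψ` at `(x, y)`, recurrence forces `d(x, y) ≤ d(ψ x, ψ y)`, so `ψ` is an
isometry, in particular measurable. The image measure of `μ` then dominates `μ` and has the
same total mass, hence equals `μ`.
-/

open MeasureTheory Function Set

namespace LipschitzWith

variable {X : Type*} [MetricSpace X] [CompactSpace X]

theorem mem_closure_range_iterate_succ {g : X → X} (hg : LipschitzWith 1 g)
    (hs : Surjective g) (p : X) : p ∈ closure (range fun n => g^[n + 1] p) := by
  rw [Metric.mem_closure_range_iff]
  intro ε hε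
  set σ := surjInv hs
  have hσ : ∀ n, RightInverse σ^[n] g^[n] := fun n => (rightInverse_surjInv hs).iterate n
  obtain ⟨a, -, φ, hφ, hconv⟩ :=
    isCompact_univ.tendsto_subseq (x := fun n => σ^[n] p) fun _ => mem_univ _
  obtain ⟨N, hN⟩ := Metric.cauchySeq_iff'.mp hconv.cauchySeq ε hε
  set k := φ N
  set l := φ (N + 1)
  have hkl : k < l := hφ N.lt_succ_self
  have hback : g^[l - k] p = g^[l] (σ^[k] p) := by
    conv_lhs => rw [← hσ k p]
    rw [← iterate_add_apply, Nat.sub_add_cancel hkl.le]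
  refine ⟨l - k - 1, ?_⟩
  calc dist p (g^[l - k - 1 + 1] p)
      = dist (g^[l] (σ^[l] p)) (g^[l] (σ^[k] p)) := by
        rw [Nat.sub_add_cancel (Nat.sub_pos_of_lt hkl), hback, hσ l p]
    _ ≤ dist (σ^[l] p) (σ^[k] p) := by simpa using (hg.iterate l).dist_le_mul _ _
    _ < ε := hN (N + 1) N.le_succ

theorem isometry_of_surjective {ψ : X → X} (hψ : LipschitzWith 1 ψ) (hs : Surjective ψ) :
    Isometry ψ := by
  refine Isometry.of_dist_eq fun x y => le_antisymm (by simpa using hψ.dist_le_mul x y) ?_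
  have hprod : LipschitzWith 1 (Prod.map ψ ψ) := LipschitzWith.mk_one fun a b => by
    simp only [Prod.dist_eq, Prod.map_fst, Prod.map_snd]
    exact max_le_max (by simpa using hψ.dist_le_mul a.1 b.1)
      (by simpa using hψ.dist_le_mul a.2 b.2)
  have hclosed : IsClosed {q : X × X | dist q.1 q.2 ≤ dist (ψ x) (ψ y)} :=
    isClosed_le (continuous_fst.dist continuous_snd) continuous_const
  refine hclosed.closure_subset_iff.mpr ?_
    (hprod.mem_closure_range_iterate_succ (hs.prodMap hs) (x, y))
  rintro _ ⟨n, rfl⟩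
  simp only [Prod.map_iterate, iterate_succ_apply, Prod.map_apply, mem_ofPred_eq]
  simpa using (hψ.iterate n).dist_le_mul (ψ x) (ψ y)

end LipschitzWith

theorem MeasureTheory.Measure.map_eq_self_of_le_map {α : Type*} [MeasurableSpace α]
    {μ : Measure α} [IsFiniteMeasure μ] {f : α → α} (hf : Measurable f) (h : μ ≤ μ.map f) :
    μ.map f = μ :=
  (Measure.eq_of_le_of_measure_univ_eq h (by rw [Measure.map_apply hf .univ, preimage_univ])).symm

/-- A surjective, 1-Lipschitz, measure-contracting self-mapping of a compact metric
space with a finite Borel measure is a bijective isometry and is measure-preserving. -/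
theorem stmt_0 {X : Type*} [MetricSpace X] [CompactSpace X]
    [MeasurableSpace X] [BorelSpace X]
    (μ : Measure X) [IsFiniteMeasure μ]
    (ψ : X → X) (hsurj : Function.Surjective ψ)
    (hlip : ∀ x y : X, dist (ψ x) (ψ y) ≤ dist x y)
    (hcontr : ∀ A : Set X, MeasurableSet A → μ A ≤ μ (ψ ⁻¹' A)) :
    Function.Bijective ψ ∧ (∀ x y : X, dist (ψ x) (ψ y) = dist x y) ∧
      (∀ A : Set X, MeasurableSet A → μ (ψ ⁻¹' A) = μ A) := by
  have hiso : Isometry ψ := (LipschitzWith.mk_one hlip).isometry_of_surjective hsurj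
  have hmeas : Measurable ψ := hiso.continuous.measurable
  have hmap : μ.map ψ = μ := Measure.map_eq_self_of_le_map hmeas <|
    Measure.le_iff.mpr fun A hA => (hcontr A hA).trans_eq (Measure.map_apply hmeas hA).symm
  refine ⟨⟨hiso.injective, hsurj⟩, hiso.dist_eq, fun A hA => ?_⟩
  rw [← Measure.map_apply hmeas hA, hmap]
end

section
/- Let X be a metric space and ⪯ a partial order on X whose graph {(x,y) : x ⪯ y} is closed in X × X and which is down-compact, meaning that for every compact K⁺ ⊆ X the set Down(K⁺) = {x ∈ X : ∃ x⁺ ∈ K⁺, x ⪯ x⁺} is compact. Then the following sandwich theorem holds: if sequences (x⁻ₙ), (xₙ), (x⁺ₙ) in X satisfy x⁻ₙ ⪯ xₙ ⪯ x⁺ₙ for all n, and both x⁻ₙ → x∞ and x⁺ₙ → x∞, then xₙ → x∞. -/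
/-!
Since `bₙ ⪯ cₙ`, the sequence `b` lies in `Down(range c ∪ {x})`, which is compact by down-compactness,
so `b` converges as soon as it has `x` as its only cluster point. If `y` is a cluster point of `b`,
passing to the limit along the same subnet in `aₙ ⪯ bₙ ⪯ cₙ` gives `x ⪯ y ⪯ x` by closedness of
the order, hence `y = x`.
-/

open Filter Topology

section ClusterPoints

variable {ι X Y : Type*} [TopologicalSpace X] [TopologicalSpace Y] {l : Filter ι}
  {a : ι → X} {b : ι → Y} {x : X} {y : Y}

theorem Filter.Tendsto.prodMk_mapClusterPt (ha : Tendsto a l (𝓝 x)) (hb : MapClusterPt y l b) :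
    MapClusterPt (x, y) l fun n ↦ (a n, b n) := by
  obtain ⟨U, hUl, hbU⟩ := mapClusterPt_iff_ultrafilter.1 hb
  exact mapClusterPt_iff_ultrafilter.2 ⟨U, hUl, (ha.mono_left hUl).prodMk_nhds hbU⟩

theorem MapClusterPt.prodMk_tendsto (ha : MapClusterPt x l a) (hb : Tendsto b l (𝓝 y)) :
    MapClusterPt (x, y) l fun n ↦ (a n, b n) := by
  obtain ⟨U, hUl, haU⟩ := mapClusterPt_iff_ultrafilter.1 ha
  exact mapClusterPt_iff_ultrafilter.2 ⟨U, hUl, haU.prodMk_nhds (hb.mono_left hUl)⟩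

end ClusterPoints

theorem IsCompact.tendsto_of_squeeze_rel {ι X : Type*} [TopologicalSpace X] {l : Filter ι}
    {r : X → X → Prop} (hanti : ∀ x y, r x y → r y x → x = y)
    (hclosed : IsClosed {p : X × X | r p.1 p.2}) {K : Set X} (hK : IsCompact K)
    {a b c : ι → X} {x : X} (hbK : ∀ᶠ n in l, b n ∈ K)
    (hab : ∀ᶠ n in l, r (a n) (b n)) (hbc : ∀ᶠ n in l, r (b n) (c n))
    (ha : Tendsto a l (𝓝 x)) (hc : Tendsto c l (𝓝 x)) :
    Tendsto b l (𝓝 x) := by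
  refine hK.tendsto_nhds_of_unique_mapClusterPt hbK fun y _ hy ↦ hanti y x ?_ ?_
  · exact hclosed.mem_of_mapClusterPt (hy.prodMk_tendsto hc) hbc
  · exact hclosed.mem_of_mapClusterPt (ha.prodMk_mapClusterPt hy) hab

theorem stmt_3_general {X : Type*} [MetricSpace X] (r : X → X → Prop)
    (hanti : ∀ x y, r x y → r y x → x = y)
    (hclosed : IsClosed {p : X × X | r p.1 p.2})
    (hdc : ∀ K : Set X, IsCompact K → IsCompact {x | ∃ y ∈ K, r x y})
    (a b c : ℕ → X) (x : X)
    (hab : ∀ n, r (a n) (b n)) (hbc : ∀ n, r (b n) (c n))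
    (ha : Tendsto a atTop (nhds x)) (hc : Tendsto c atTop (nhds x)) :
    Tendsto b atTop (nhds x) := by
  have hbDown : ∀ n, b n ∈ {z | ∃ y ∈ insert x (Set.range c), r z y} :=
    fun n ↦ ⟨c n, Set.mem_insert_of_mem _ ⟨n, rfl⟩, hbc n⟩
  exact (hdc _ hc.isCompact_insert_range).tendsto_of_squeeze_rel hanti hclosed
    (.of_forall hbDown) (.of_forall hab) (.of_forall hbc) ha hc

/-- Sandwich theorem for a closed, down-compact partial order on a metric space. -/
theorem stmt_3 {X : Type*} [MetricSpace X] (r : X → X → Prop)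
    (hrefl : ∀ x, r x x)
    (hanti : ∀ x y, r x y → r y x → x = y)
    (htrans : ∀ x y z, r x y → r y z → r x z)
    (hclosed : IsClosed {p : X × X | r p.1 p.2})
    (hdc : ∀ K : Set X, IsCompact K → IsCompact {x | ∃ y ∈ K, r x y})
    (a b c : ℕ → X) (x : X)
    (hab : ∀ n, r (a n) (b n)) (hbc : ∀ n, r (b n) (c n))
    (ha : Tendsto a atTop (nhds x)) (hc : Tendsto c atTop (nhds x)) :
    Tendsto b atTop (nhds x) :=
  stmt_3_general r hanti hclosed hdc a b c x hab hbc ha hc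
end

section
/- Let X and Y be compact subsets of a metric space (Z,δ) such that X ∪ Y (with the induced metric) is a geodesic space. Then for every ε > 0, the intersection of the ε-neighborhoods satisfies Xᵉ ∩ Yᵉ ⊆ (X ∩ Y)^{2ε}, where Aᵉ = {z ∈ Z : δ(z,A) < ε} denotes the ε-neighborhood of A in Z. -/
open Metric Set

/-- A subset `S` of a metric space is geodesic if any two of its points are joined by
an isometric path `[0, dist x y] → S`. -/
def IsGeodesicSubset {Z : Type*} [MetricSpace Z] (S : Set Z) : Prop :=
  ∀ x ∈ S, ∀ y ∈ S, ∃ p : ℝ → Z,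
    p 0 = x ∧ p (dist x y) = y ∧
    (∀ t ∈ Set.Icc (0 : ℝ) (dist x y), p t ∈ S) ∧
    (∀ s ∈ Set.Icc (0 : ℝ) (dist x y), ∀ t ∈ Set.Icc (0 : ℝ) (dist x y),
      dist (p s) (p t) = |s - t|)

/-!
Join a point `x ∈ X` close to `z` to a point `y ∈ Y` close to `z` by a geodesic in `X ∪ Y`.
By connectedness the geodesic passes through a point `w ∈ X ∩ Y`, and since `w` lies on a
geodesic, `d(x,w) + d(w,y) = d(x,y) ≤ d(z,x) + d(z,y) < 2ε`. Hence
`2 d(z,w) ≤ d(z,x) + d(x,w) + d(z,y) + d(y,w) < 4ε`.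
-/

lemma continuousOn_of_dist_eq_abs {Z : Type*} [PseudoMetricSpace Z] {p : ℝ → Z} {s : Set ℝ}
    (hp : ∀ a ∈ s, ∀ b ∈ s, dist (p a) (p b) = |a - b|) : ContinuousOn p s :=
  (LipschitzOnWith.of_dist_le_mul (K := 1) fun a ha b hb => by
    rw [hp a ha b hb, NNReal.coe_one, one_mul, Real.dist_eq]).continuousOn

lemma IsGeodesicSubset.exists_mem_inter_dist_add_dist_eq {Z : Type*} [MetricSpace Z]
    {X Y : Set Z} (hgeo : IsGeodesicSubset (X ∪ Y)) (hX : IsClosed X) (hY : IsClosed Y)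
    {x y : Z} (hx : x ∈ X) (hy : y ∈ Y) :
    ∃ w ∈ X ∩ Y, dist x w + dist w y = dist x y := by
  obtain ⟨p, hp0, hpL, hpS, hiso⟩ := hgeo x (Or.inl hx) y (Or.inr hy)
  set L := dist x y
  have h0 : (0 : ℝ) ∈ Icc 0 L := left_mem_Icc.2 dist_nonneg
  have hL : L ∈ Icc 0 L := right_mem_Icc.2 dist_nonneg
  have hpath : IsPreconnected (p '' Icc 0 L) :=
    isPreconnected_Icc.image p (continuousOn_of_dist_eq_abs hiso)
  obtain ⟨_, ⟨t, ht, rfl⟩, hw⟩ := isPreconnected_closed_iff.1 hpath X Y hX hY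
    (image_subset_iff.2 hpS) ⟨x, ⟨0, h0, hp0⟩, hx⟩ ⟨y, ⟨L, hL, hpL⟩, hy⟩
  refine ⟨p t, hw, ?_⟩
  have hxw : dist x (p t) = t := by
    rw [← hp0, hiso 0 h0 t ht, zero_sub, abs_neg, abs_of_nonneg ht.1]
  have hwy : dist (p t) y = L - t := by
    rw [← hpL, hiso t ht L hL, abs_sub_comm, abs_of_nonneg (sub_nonneg.2 ht.2)]
  rw [hxw, hwy, add_sub_cancel]

theorem stmt_4_general {Z : Type*} [MetricSpace Z] (X Y : Set Z)
    (hX : IsCompact X) (hY : IsCompact Y)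
    (hgeo : IsGeodesicSubset (X ∪ Y))
    (ε : ℝ) :
    thickening ε X ∩ thickening ε Y ⊆ thickening (2 * ε) (X ∩ Y) := by
  rintro z ⟨hzX, hzY⟩
  obtain ⟨x, hx, hzx⟩ := mem_thickening_iff.1 hzX
  obtain ⟨y, hy, hzy⟩ := mem_thickening_iff.1 hzY
  obtain ⟨w, hw, hxwy⟩ :=
    hgeo.exists_mem_inter_dist_add_dist_eq hX.isClosed hY.isClosed hx hy
  refine mem_thickening_iff.2 ⟨w, hw, ?_⟩
  have hxy : dist x y ≤ dist z x + dist z y := dist_triangle_left x y z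
  have hzw_x : dist z w ≤ dist z x + dist x w := dist_triangle z x w
  have hzw_y : dist z w ≤ dist z y + dist w y := dist_triangle_right z w y
  linarith

/-- If `X ∪ Y` is geodesic, then the `ε`-neighborhoods satisfy
`Xᵉ ∩ Yᵉ ⊆ (X ∩ Y)^{2ε}`. -/
theorem stmt_4 {Z : Type*} [MetricSpace Z] (X Y : Set Z)
    (hX : IsCompact X) (hY : IsCompact Y)
    (hgeo : IsGeodesicSubset (X ∪ Y))
    (ε : ℝ) (hε : 0 < ε) :
    thickening ε X ∩ thickening ε Y ⊆ thickening (2 * ε) (X ∩ Y) :=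
  stmt_4_general X Y hX hY hgeo ε
end

section
/- Let (Z,δ) be a compact metric space and suppose Xₙ → X∞ and Yₙ → Y∞ in the Hausdorff metric on compact subsets of Z, where for each n the set Xₙ ∪ Yₙ (with the induced metric) is a geodesic space. Then Xₙ ∩ Yₙ → X∞ ∩ Y∞ in the Hausdorff metric. -/
open Metric Set Filter

/-- Points uniformly close to two closed sets are close to their intersection,
when the intersection is nonempty (compactness argument). -/
lemma key_close {Z : Type*} [MetricSpace Z] [CompactSpace Z] (A B : Set Z)
    (hA : IsClosed A) (hB : IsClosed B) (hAB : (A ∩ B).Nonempty)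
    {ε : ℝ} (hε : 0 < ε) :
    ∃ δ > 0, ∀ z : Z, infDist z A ≤ δ → infDist z B ≤ δ → infDist z (A ∩ B) ≤ ε := by
  have _inst : Nonempty Z := ⟨hAB.choose⟩
  by_contra h
  push_neg at h
  choose! u hu1 hu2 hu3 using h
  set v : ℕ → Z := fun k => u (1 / (k + 1)) with hv
  have hpos : ∀ k : ℕ, (0 : ℝ) < 1 / ((k : ℝ) + 1) := by intro k; positivity
  obtain ⟨l, φ, hφ, hlim⟩ := CompactSpace.tendsto_subseq v
  have hone : Tendsto (fun k : ℕ => 1 / ((φ k : ℝ) + 1)) atTop (nhds 0) :=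
    tendsto_one_div_add_atTop_nhds_zero_nat.comp hφ.tendsto_atTop
  have hlA : infDist l A ≤ 0 :=
    le_of_tendsto_of_tendsto' (((continuous_infDist_pt A).tendsto l).comp hlim) hone
      (fun k => hu1 _ (hpos (φ k)))
  have hlB : infDist l B ≤ 0 :=
    le_of_tendsto_of_tendsto' (((continuous_infDist_pt B).tendsto l).comp hlim) hone
      (fun k => hu2 _ (hpos (φ k)))
  have hAne : A.Nonempty := hAB.mono inter_subset_left
  have hBne : B.Nonempty := hAB.mono inter_subset_right
  have hlmemA : l ∈ A := (hA.mem_iff_infDist_zero hAne).mpr (le_antisymm hlA infDist_nonneg)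
  have hlmemB : l ∈ B := (hB.mem_iff_infDist_zero hBne).mpr (le_antisymm hlB infDist_nonneg)
  have hdist : Tendsto (fun k => dist (v (φ k)) l) atTop (nhds 0) :=
    tendsto_iff_dist_tendsto_zero.mp hlim
  have hge : ∀ k, ε ≤ dist (v (φ k)) l := by
    intro k
    have h1 : ε < infDist (v (φ k)) (A ∩ B) := hu3 _ (hpos (φ k))
    have h2 : infDist (v (φ k)) (A ∩ B) ≤ dist (v (φ k)) l :=
      infDist_le_dist_of_mem ⟨hlmemA, hlmemB⟩
    linarith
  have : ε ≤ 0 := ge_of_tendsto' hdist hge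
  linarith

/-- If `Xₙ → X∞` and `Yₙ → Y∞` in the Hausdorff metric on compact subsets of a compact
metric space, and each `Xₙ ∪ Yₙ` is geodesic, then `Xₙ ∩ Yₙ → X∞ ∩ Y∞` in the Hausdorff
metric. -/
theorem stmt_5 {Z : Type*} [MetricSpace Z] [CompactSpace Z]
    (X Y : ℕ → Set Z) (Xinf Yinf : Set Z)
    (hXc : ∀ n, IsCompact (X n)) (hYc : ∀ n, IsCompact (Y n))
    (hXinfc : IsCompact Xinf) (hYinfc : IsCompact Yinf)
    (hgeo : ∀ n, IsGeodesicSubset (X n ∪ Y n))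
    (hXconv : Tendsto (fun n => hausdorffDist (X n) Xinf) atTop (nhds 0))
    (hYconv : Tendsto (fun n => hausdorffDist (Y n) Yinf) atTop (nhds 0)) :
    Tendsto (fun n => hausdorffDist (X n ∩ Y n) (Xinf ∩ Yinf)) atTop (nhds 0) := by
  rcases (Xinf ∩ Yinf).eq_empty_or_nonempty with hIe | hIne
  · have hz : ∀ n, hausdorffDist (X n ∩ Y n) (Xinf ∩ Yinf) = 0 := by
      intro n; rw [hIe, hausdorffDist_empty]
    simpa only [hz] using (tendsto_const_nhds : Tendsto (fun _ : ℕ => (0 : ℝ)) atTop (nhds 0))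
  obtain ⟨w0, hw0⟩ := hIne
  have hXine : Xinf.Nonempty := ⟨w0, hw0.1⟩
  have hYine : Yinf.Nonempty := ⟨w0, hw0.2⟩
  rw [Metric.tendsto_atTop]
  intro ε hε
  obtain ⟨δ, hδ, hkey⟩ := key_close Xinf Yinf hXinfc.isClosed hYinfc.isClosed ⟨w0, hw0⟩
    (show (0 : ℝ) < ε / 2 by linarith)
  set ε' := min δ (ε / 8) with hε'def
  have hε'pos : 0 < ε' := lt_min hδ (by linarith)
  have hX' : ∀ᶠ n in atTop, hausdorffDist (X n) Xinf < ε' :=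
    hXconv.eventually (gt_mem_nhds hε'pos)
  have hY' : ∀ᶠ n in atTop, hausdorffDist (Y n) Yinf < ε' :=
    hYconv.eventually (gt_mem_nhds hε'pos)
  obtain ⟨N, hN⟩ := eventually_atTop.mp (hX'.and hY')
  refine ⟨N, fun n hn => ?_⟩
  obtain ⟨hdX, hdY⟩ := hN n hn
  have hε'δ : ε' ≤ δ := min_le_left _ _
  have hε'8 : ε' ≤ ε / 8 := min_le_right _ _
  -- main bound : hausdorffDist ≤ ε / 2
  have hmain : hausdorffDist (X n ∩ Y n) (Xinf ∩ Yinf) ≤ ε / 2 := by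
    by_cases hXne : (X n).Nonempty
    · by_cases hYne : (Y n).Nonempty
      · have hedX : EMetric.hausdorffEdist (X n) Xinf ≠ ⊤ :=
          hausdorffEdist_ne_top_of_nonempty_of_bounded hXne hXine
            isBounded_of_compactSpace isBounded_of_compactSpace
        have hedY : EMetric.hausdorffEdist (Y n) Yinf ≠ ⊤ :=
          hausdorffEdist_ne_top_of_nonempty_of_bounded hYne hYine
            isBounded_of_compactSpace isBounded_of_compactSpace
        apply hausdorffDist_le_of_infDist (by linarith)
        · -- direction (a): points of Xₙ ∩ Yₙ are close to X∞ ∩ Y∞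
          intro z hz
          have h1 : infDist z Xinf ≤ hausdorffDist (X n) Xinf :=
            infDist_le_hausdorffDist_of_mem hz.1 hedX
          have h2 : infDist z Yinf ≤ hausdorffDist (Y n) Yinf :=
            infDist_le_hausdorffDist_of_mem hz.2 hedY
          exact hkey z (by linarith) (by linarith)
        · -- direction (b): points of X∞ ∩ Y∞ are close to Xₙ ∩ Yₙ (geodesic argument)
          intro w hw
          have h1 : infDist w (X n) ≤ hausdorffDist Xinf (X n) :=
            infDist_le_hausdorffDist_of_mem hw.1 (by rw [EMetric.hausdorffEdist_comm]; exact hedX)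
          have h2 : infDist w (Y n) ≤ hausdorffDist Yinf (Y n) :=
            infDist_le_hausdorffDist_of_mem hw.2 (by rw [EMetric.hausdorffEdist_comm]; exact hedY)
          rw [hausdorffDist_comm] at h1 h2
          obtain ⟨x, hx, hxd⟩ := (hXc n).exists_infDist_eq_dist hXne w
          obtain ⟨y, hy, hyd⟩ := (hYc n).exists_infDist_eq_dist hYne w
          have hdwx : dist w x ≤ ε / 8 := by rw [← hxd]; linarith
          have hdwy : dist w y ≤ ε / 8 := by rw [← hyd]; linarith
          obtain ⟨p, hp0, hpL, hpmem, hiso⟩ :=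
            hgeo n x (mem_union_left _ hx) y (mem_union_right _ hy)
          set L := dist x y with hLdef
          have hL0 : 0 ≤ L := dist_nonneg
          have hL : L ≤ ε / 4 :=
            calc L ≤ dist x w + dist w y := dist_triangle x w y
            _ ≤ ε / 8 + ε / 8 := by rw [dist_comm x w]; linarith
            _ = ε / 4 := by ring
          -- p is continuous on [0, L]
          have hlip : LipschitzOnWith 1 p (Icc 0 L) := by
            apply LipschitzOnWith.of_dist_le_mul
            intro s hs t ht
            rw [hiso s hs t ht, Real.dist_eq, NNReal.coe_one, one_mul]
          set T : Set ℝ := Icc 0 L ∩ p ⁻¹' (X n) with hTdef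
          have hTclosed : IsClosed T :=
            hlip.continuousOn.preimage_isClosed_of_isClosed isClosed_Icc (hXc n).isClosed
          have h0T : (0 : ℝ) ∈ T := ⟨⟨le_refl 0, hL0⟩, by rw [mem_preimage, hp0]; exact hx⟩
          have hTne : T.Nonempty := ⟨0, h0T⟩
          have hTbdd : BddAbove T := BddAbove.mono inter_subset_left bddAbove_Icc
          set t₀ := sSup T with ht₀def
          have ht₀T : t₀ ∈ T := hTclosed.csSup_mem hTne hTbdd
          have ht₀Icc : t₀ ∈ Icc 0 L := ht₀T.1
          have hpX : p t₀ ∈ X n := ht₀T.2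
          have hpY : p t₀ ∈ Y n := by
            rcases eq_or_lt_of_le ht₀Icc.2 with heq | hlt
            · rw [heq, hpL]; exact hy
            · have hclo : p t₀ ∈ closure (Y n) := by
                rw [Metric.mem_closure_iff]
                intro r hr
                set t := t₀ + min (r / 2) (L - t₀) with htdef
                have hminpos : 0 < min (r / 2) (L - t₀) := lt_min (by linarith) (by linarith)
                have htIcc : t ∈ Icc 0 L := by
                  constructor
                  · have := ht₀Icc.1; rw [htdef]; linarith
                  · have : min (r / 2) (L - t₀) ≤ L - t₀ := min_le_right _ _
                    rw [htdef]; linarith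
                have hptY : p t ∈ Y n := by
                  rcases hpmem t htIcc with h | h
                  · exfalso
                    have : t ≤ t₀ := le_csSup hTbdd ⟨htIcc, h⟩
                    rw [htdef] at this; linarith
                  · exact h
                refine ⟨p t, hptY, ?_⟩
                rw [hiso t₀ ht₀Icc t htIcc]
                have : |t₀ - t| = min (r / 2) (L - t₀) := by
                  rw [htdef, abs_of_nonpos (by linarith)]; ring
                rw [this]
                calc min (r / 2) (L - t₀) ≤ r / 2 := min_le_left _ _
                _ < r := by linarith
              rwa [(hYc n).isClosed.closure_eq] at hclo
          have hdxz : dist x (p t₀) ≤ ε / 4 := by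
            have h00 : (0 : ℝ) ∈ Icc (0 : ℝ) L := ⟨le_refl 0, hL0⟩
            have := hiso 0 h00 t₀ ht₀Icc
            rw [hp0] at this
            rw [this, abs_of_nonpos (by linarith [ht₀Icc.1]), neg_sub, sub_zero]
            linarith [ht₀Icc.2]
          have hfinal : dist w (p t₀) ≤ ε / 2 :=
            calc dist w (p t₀) ≤ dist w x + dist x (p t₀) := dist_triangle _ _ _
            _ ≤ ε / 8 + ε / 4 := by linarith
            _ ≤ ε / 2 := by linarith
          exact le_trans (infDist_le_dist_of_mem ⟨hpX, hpY⟩) hfinal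
      · have : Y n = ∅ := not_nonempty_iff_eq_empty.mp hYne
        rw [inter_comm, this, empty_inter, hausdorffDist_empty']
        linarith
    · have : X n = ∅ := not_nonempty_iff_eq_empty.mp hXne
      rw [this, empty_inter, hausdorffDist_empty']
      linarith
  rw [Real.dist_0_eq_abs, abs_of_nonneg hausdorffDist_nonneg]
  linarith
end

section
/- Let ξ = (ξ₁,...,ξₙ) be an exchangeable random vector in ℝⁿ with E[‖ξ‖₂²] < ∞, and let S_k = ξ₁ + ... + ξ_k. Then for all 1 ≤ k ≤ n, Var(S_k) ≤ (k/n)·E[‖ξ‖₂²] + (k²/n²)·Var(Sₙ). -/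
open MeasureTheory ProbabilityTheory

/-- Variance bound for partial sums of an exchangeable random vector:
`Var(S_k) ≤ (k/n)·E[‖ξ‖₂²] + (k²/n²)·Var(Sₙ)`. -/
theorem stmt_8 {Ω : Type*} [MeasureSpace Ω] [IsProbabilityMeasure (ℙ : Measure Ω)]
    (n : ℕ) (hn : 0 < n) (ξ : Ω → Fin n → ℝ) (hmeas : Measurable ξ)
    (hexch : ∀ σ : Equiv.Perm (Fin n),
      Measure.map (fun ω => ξ ω ∘ σ) ℙ = Measure.map ξ ℙ)
    (hL2 : Integrable (fun ω => ∑ i, (ξ ω i) ^ 2))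
    (k : ℕ) (hk1 : 1 ≤ k) (hkn : k ≤ n) :
    variance (fun ω => ∑ i : Fin n, if (i : ℕ) < k then ξ ω i else 0) ℙ ≤
      ((k : ℝ) / n) * (∫ ω, ∑ i, (ξ ω i) ^ 2) +
        ((k : ℝ) ^ 2 / (n : ℝ) ^ 2) * variance (fun ω => ∑ i, ξ ω i) ℙ := by
  have hmi : ∀ i, Measurable fun ω => ξ ω i := fun i => (measurable_pi_apply i).comp hmeas
  -- exchange key lemma
  have key : ∀ (σ : Equiv.Perm (Fin n)) (g : (Fin n → ℝ) → ℝ), Measurable g →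
      ∫ ω, g (ξ ω ∘ σ) = ∫ ω, g (ξ ω) := by
    intro σ g hg
    have h1 : Measurable fun ω => ξ ω ∘ σ := measurable_pi_lambda _ fun i => hmi (σ i)
    rw [← integral_map h1.aemeasurable hg.aestronglyMeasurable,
      ← integral_map hmeas.aemeasurable hg.aestronglyMeasurable, hexch σ]
  -- integrability
  have hsq : ∀ i, Integrable fun ω => (ξ ω i) ^ 2 := by
    intro i
    refine hL2.mono ((hmi i).pow_const 2).aestronglyMeasurable (ae_of_all _ fun ω => ?_)
    rw [Real.norm_eq_abs, Real.norm_eq_abs, abs_of_nonneg (sq_nonneg _),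
      abs_of_nonneg (Finset.sum_nonneg fun j _ => sq_nonneg _)]
    exact Finset.single_le_sum (fun j _ => sq_nonneg (ξ ω j)) (Finset.mem_univ i)
  have hmem : ∀ i, MemLp (fun ω => ξ ω i) 2 ℙ := fun i =>
    (memLp_two_iff_integrable_sq (hmi i).aestronglyMeasurable).2 (hsq i)
  have hint : ∀ i, Integrable fun ω => ξ ω i := fun i => (hmem i).integrable one_le_two
  have hprod : ∀ i j, Integrable fun ω => ξ ω i * ξ ω j := by
    intro i j
    refine hL2.mono ((hmi i).mul (hmi j)).aestronglyMeasurable (ae_of_all _ fun ω => ?_)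
    simp only [Real.norm_eq_abs]
    rw [abs_of_nonneg (Finset.sum_nonneg fun l _ => sq_nonneg (ξ ω l)), abs_mul]
    have h1 : (ξ ω i) ^ 2 ≤ ∑ l, (ξ ω l) ^ 2 :=
      Finset.single_le_sum (fun l _ => sq_nonneg (ξ ω l)) (Finset.mem_univ i)
    have h2 : (ξ ω j) ^ 2 ≤ ∑ l, (ξ ω l) ^ 2 :=
      Finset.single_le_sum (fun l _ => sq_nonneg (ξ ω l)) (Finset.mem_univ j)
    nlinarith [abs_nonneg (ξ ω i), abs_nonneg (ξ ω j), sq_abs (ξ ω i), sq_abs (ξ ω j),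
      sq_nonneg (|ξ ω i| - |ξ ω j|)]
  -- moments
  set i0 : Fin n := ⟨0, hn⟩ with hi0
  set m : ℝ := ∫ ω, ξ ω i0 with hm_def
  set q : ℝ := ∫ ω, (ξ ω i0) ^ 2 with hq_def
  have hm : ∀ i, ∫ ω, ξ ω i = m := by
    intro i
    have := key (Equiv.swap i i0) (fun x => x i0) (measurable_pi_apply i0)
    simpa [Equiv.swap_apply_right] using this
  have hq : ∀ i, ∫ ω, (ξ ω i) ^ 2 = q := by
    intro i
    have := key (Equiv.swap i i0) (fun x => (x i0) ^ 2) ((measurable_pi_apply i0).pow_const 2)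
    simpa [Equiv.swap_apply_right] using this
  have hpx : ∃ p : ℝ, ∀ i j : Fin n, i ≠ j → ∫ ω, ξ ω i * ξ ω j = p := by
    rcases lt_or_ge n 2 with h2 | h2
    · refine ⟨0, fun i j hij => absurd ?_ hij⟩
      exact Fin.ext (by omega)
    · set i1 : Fin n := ⟨1, h2⟩ with hi1
      refine ⟨∫ ω, ξ ω i0 * ξ ω i1, fun i j hij => ?_⟩
      set σ : Equiv.Perm (Fin n) :=
        (Equiv.swap i0 i).trans (Equiv.swap ((Equiv.swap i0 i) i1) j) with hσ
      have h01 : i0 ≠ i1 := by simp [hi0, hi1, Fin.ext_iff]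
      have hji'' : i ≠ (Equiv.swap i0 i) i1 := by
        intro h
        exact h01 ((Equiv.swap i0 i).injective (by simp [← h])).symm
      have hσ0 : σ i0 = i := by
        rw [hσ, Equiv.trans_apply, Equiv.swap_apply_left,
          Equiv.swap_apply_of_ne_of_ne hji'' hij]
      have hσ1 : σ i1 = j := by
        rw [hσ, Equiv.trans_apply, Equiv.swap_apply_left]
      have := key σ (fun x => x i0 * x i1)
        ((measurable_pi_apply i0).mul (measurable_pi_apply i1))
      simp only [Function.comp_apply] at this
      rw [← this]
      simp [hσ0, hσ1]
  obtain ⟨p, hp⟩ := hpx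
  -- sums over a finset
  have hES : ∀ s : Finset (Fin n), ∫ ω, ∑ i ∈ s, ξ ω i = s.card * m := by
    intro s
    rw [integral_finset_sum s fun i _ => hint i]
    simp [hm, Finset.sum_const, nsmul_eq_mul]
  have hES2 : ∀ s : Finset (Fin n), ∫ ω, (∑ i ∈ s, ξ ω i) ^ 2
      = s.card * q + (s.card ^ 2 - s.card) * p := by
    intro s
    have e1 : ∀ ω, (∑ i ∈ s, ξ ω i) ^ 2 = ∑ i ∈ s, ∑ j ∈ s, ξ ω i * ξ ω j := by
      intro ω; rw [sq, Finset.sum_mul_sum]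
    simp_rw [e1]
    rw [integral_finset_sum s fun i _ => integrable_finset_sum s fun j _ => hprod i j]
    have e2 : ∀ i ∈ s, ∫ ω, ∑ j ∈ s, ξ ω i * ξ ω j = s.card * p + (q - p) := by
      intro i hi
      rw [integral_finset_sum s fun j _ => hprod i j]
      have e3 : ∀ j ∈ s, ∫ ω, ξ ω i * ξ ω j = p + (if i = j then q - p else 0) := by
        intro j _
        rcases eq_or_ne i j with rfl | hij
        · simp [← sq, hq i]
        · simp [hij, hp i j hij]
      rw [Finset.sum_congr rfl e3, Finset.sum_add_distrib, Finset.sum_const,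
        Finset.sum_ite_eq s i fun _ => q - p, if_pos hi, nsmul_eq_mul]
    rw [Finset.sum_congr rfl e2, Finset.sum_const, nsmul_eq_mul]
    ring
  have hVar : ∀ s : Finset (Fin n), variance (fun ω => ∑ i ∈ s, ξ ω i) ℙ
      = s.card * q + (s.card ^ 2 - s.card) * p - (s.card * m) ^ 2 := by
    intro s
    rw [variance_eq_sub (memLp_finset_sum s fun i _ => hmem i)]
    simp only [Pi.pow_apply]
    rw [hES2 s, hES s]
  -- cardinalities
  set F : Finset (Fin n) := Finset.univ.filter fun i => (i : ℕ) < k with hF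
  have hFr : F = Finset.attachFin (Finset.range k)
      (fun m hm => lt_of_lt_of_le (Finset.mem_range.1 hm) hkn) := by
    ext a; simp [hF, Finset.mem_attachFin]
  have hcF : F.card = k := by rw [hFr, Finset.card_attachFin, Finset.card_range]
  -- rewrite goal
  have egoal : (fun ω => ∑ i : Fin n, if (i : ℕ) < k then ξ ω i else 0)
      = fun ω => ∑ i ∈ F, ξ ω i := by
    funext ω; rw [hF, Finset.sum_filter]
  have euniv : (fun ω => ∑ i, ξ ω i) = fun ω => ∑ i ∈ (Finset.univ : Finset (Fin n)), ξ ω i := rfl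
  have hnormint : ∫ ω, ∑ i, (ξ ω i) ^ 2 = n * q := by
    rw [integral_finset_sum Finset.univ fun i _ => hsq i]
    simp [hq, Finset.sum_const, nsmul_eq_mul]
  have hVn0 : (0:ℝ) ≤ n * q + ((n:ℝ) ^ 2 - n) * p - (n * m) ^ 2 := by
    have := variance_nonneg (fun ω => ∑ i, ξ ω i) ℙ
    rwa [euniv, hVar, Finset.card_univ, Fintype.card_fin] at this
  rw [egoal, euniv, hVar, hVar, hnormint, hcF, Finset.card_univ, Fintype.card_fin]
  -- pure algebra
  have hq0 : (0:ℝ) ≤ q := by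
    rw [hq_def]; exact integral_nonneg fun ω => sq_nonneg _
  have hK1 : (1:ℝ) ≤ (k:ℝ) := by exact_mod_cast hk1
  have hKN : (k:ℝ) ≤ (n:ℝ) := by exact_mod_cast hkn
  have hN0 : (0:ℝ) < (n:ℝ) := by exact_mod_cast hn
  have hkey : (0:ℝ) ≤ (k:ℝ) ^ 2 * q + (k:ℝ) * ((n:ℝ) - k) * p := by
    rcases le_or_gt 0 p with hp0 | hp0
    · have : (0:ℝ) ≤ (k:ℝ) * ((n:ℝ) - k) * p :=
        mul_nonneg (mul_nonneg (by linarith) (by linarith)) hp0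
      nlinarith
    · have hq1 : (0:ℝ) ≤ q + ((n:ℝ) - 1) * p := by
        nlinarith [sq_nonneg ((n:ℝ) * m)]
      have h1 : (0:ℝ) ≤ (k:ℝ) ^ 2 * (q + ((n:ℝ) - 1) * p) := mul_nonneg (sq_nonneg _) hq1
      have h2 : (0:ℝ) ≤ (-p) * ((k:ℝ) * n * ((k:ℝ) - 1)) := by
        apply mul_nonneg (by linarith)
        apply mul_nonneg (mul_nonneg (by linarith) hN0.le) (by linarith)
      nlinarith [h1, h2]
  have hne : (n:ℝ) ≠ 0 := hN0.ne'
  rw [← sub_nonneg]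
  have eq1 : (k:ℝ) / n * (n * q) + (k:ℝ) ^ 2 / (n:ℝ) ^ 2 *
        ((n:ℝ) * q + ((n:ℝ) ^ 2 - n) * p - (n * m) ^ 2) -
      ((k:ℝ) * q + ((k:ℝ) ^ 2 - k) * p - (k * m) ^ 2)
      = ((k:ℝ) ^ 2 * q + (k:ℝ) * ((n:ℝ) - k) * p) / n := by
    field_simp
    ring
  rw [eq1]
  exact div_nonneg hkey hN0.le
end

section
/- Let X be a nonempty finite set and ν a random probability measure on X such that the collection (ν({x}))_{x∈X} is exchangeable. Then for every subset A ⊆ X, Var(ν(A)) ≤ (|A|/|X|)·E[max_{x∈X} ν({x})]. -/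
open MeasureTheory ProbabilityTheory

set_option maxHeartbeats 1000000 in
/-- For a random probability measure `ν` on a finite set whose point masses are
exchangeable, `Var(ν(A)) ≤ (|A|/|X|)·E[max_x ν({x})]`. -/
theorem stmt_9 {Ω : Type*} [MeasureSpace Ω] [IsProbabilityMeasure (ℙ : Measure Ω)]
    {α : Type*} [Fintype α] [Nonempty α]
    (ν : Ω → α → ℝ) (hmeas : Measurable ν)
    (hnonneg : ∀ ω x, 0 ≤ ν ω x) (hsum : ∀ ω, ∑ x, ν ω x = 1)
    (hexch : ∀ σ : Equiv.Perm α,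
      Measure.map (fun ω => ν ω ∘ σ) ℙ = Measure.map ν ℙ)
    (A : Finset α) :
    variance (fun ω => ∑ x ∈ A, ν ω x) ℙ ≤
      ((A.card : ℝ) / Fintype.card α) * ∫ ω, ⨆ x, ν ω x := by
  classical
  obtain ⟨z₀⟩ := ‹Nonempty α›
  -- basic pointwise bounds
  have hle1 : ∀ ω x, ν ω x ≤ 1 := by
    intro ω x
    calc ν ω x ≤ ∑ y, ν ω y :=
          Finset.single_le_sum (fun y _ => hnonneg ω y) (Finset.mem_univ x)
      _ = 1 := hsum ω
  have hMle : ∀ (p : α → ℝ) (x : α), p x ≤ ⨆ y, p y := fun p x =>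
    le_ciSup (Set.Finite.bddAbove (Set.finite_range p)) x
  have hMub : ∀ ω, (⨆ y, ν ω y) ≤ 1 := fun ω => ciSup_le fun x => hle1 ω x
  have hMnn : ∀ ω, 0 ≤ ⨆ y, ν ω y := fun ω => le_trans (hnonneg ω z₀) (hMle (ν ω) z₀)
  have hEMnn : (0:ℝ) ≤ ∫ ω, ⨆ x, ν ω x := integral_nonneg fun ω => hMnn ω
  -- nonnegativity of RHS factor
  have hfrac : (0:ℝ) ≤ (A.card : ℝ) / Fintype.card α := by positivity
  -- variance of a constant is zero
  have hvarconst : ∀ r : ℝ, variance (fun _ : Ω => r) ℙ = 0 := by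
    intro r
    have h1 : evariance (fun _ : Ω => r) ℙ = 0 := by
      rw [evariance]
      simp
    rw [variance, h1]
    simp
  by_cases hA0 : A = ∅
  · subst hA0
    simp only [Finset.sum_empty]
    rw [hvarconst 0]
    exact mul_nonneg hfrac hEMnn
  by_cases hAu : A = Finset.univ
  · have h1 : (fun ω => ∑ x ∈ A, ν ω x) = fun _ : Ω => (1:ℝ) := by
      funext ω; rw [hAu]; exact hsum ω
    rw [h1, hvarconst 1]
    exact mul_nonneg hfrac hEMnn
  -- main case: ∅ ⊂ A ⊂ univ
  have hK1 : 1 ≤ A.card := Finset.card_pos.2 (Finset.nonempty_of_ne_empty hA0)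
  have hKn : A.card < Fintype.card α := by
    rw [← Finset.card_univ]
    exact Finset.card_lt_card (Finset.ssubset_univ_iff.2 hAu)
  have hn2 : 2 ≤ Fintype.card α := by omega
  obtain ⟨x₀, y₀, hx0y0⟩ := Fintype.exists_pair_of_one_lt_card (α := α) (by omega)
  -- measurability helpers
  have hνx : ∀ x : α, Measurable fun ω => ν ω x := fun x => (measurable_pi_apply x).comp hmeas
  have hνσ : ∀ σ : Equiv.Perm α, Measurable (fun ω => ν ω ∘ σ) := fun σ =>
    measurable_pi_lambda _ fun x => ((measurable_pi_apply (σ x)).comp hmeas)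
  have hMmeas : Measurable (fun p : α → ℝ => ⨆ x, p x) := by
    have h : (fun p : α → ℝ => ⨆ x, p x)
        = fun p => Finset.univ.sup' Finset.univ_nonempty p := by
      funext p; rw [Finset.sup'_univ_eq_ciSup]
    have h2 := Finset.measurable_sup' (s := (Finset.univ : Finset α)) Finset.univ_nonempty
      (f := fun (i : α) (p : α → ℝ) => p i) (fun i _ => measurable_pi_apply i)
    have h3 : (Finset.univ.sup' Finset.univ_nonempty fun (i : α) (p : α → ℝ) => p i)
        = fun p : α → ℝ => ⨆ x, p x := by
      funext p
      rw [Finset.sup'_apply, Finset.sup'_univ_eq_ciSup]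
    rw [← h3]; exact h2
  -- exchangeability: invariance of integrals of measurable functionals
  have hinv : ∀ (σ : Equiv.Perm α) (g : (α → ℝ) → ℝ), Measurable g →
      (∫ ω, g (ν ω ∘ σ)) = ∫ ω, g (ν ω) := by
    intro σ g hg
    rw [← integral_map (hνσ σ).aemeasurable hg.aestronglyMeasurable, hexch σ,
      integral_map hmeas.aemeasurable hg.aestronglyMeasurable]
  -- integrability of bounded measurable functions
  have hintb : ∀ f : Ω → ℝ, Measurable f → (∀ ω, |f ω| ≤ 1) → Integrable f ℙ := by
    intro f hf hb
    exact ⟨hf.aestronglyMeasurable,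
      HasFiniteIntegral.of_bounded (C := 1) (ae_of_all _ fun ω => by
        simpa [Real.norm_eq_abs] using hb ω)⟩
  have habs01 : ∀ (a : ℝ), 0 ≤ a → a ≤ 1 → |a| ≤ 1 := fun a h0 h1 => abs_le.2 ⟨by linarith, h1⟩
  have hint_x : ∀ x : α, Integrable (fun ω => ν ω x) ℙ := fun x =>
    hintb _ (hνx x) fun ω => habs01 _ (hnonneg ω x) (hle1 ω x)
  have hint_xy : ∀ x y : α, Integrable (fun ω => ν ω x * ν ω y) ℙ := fun x y =>
    hintb _ ((hνx x).mul (hνx y)) fun ω => habs01 _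
      (mul_nonneg (hnonneg ω x) (hnonneg ω y))
      (mul_le_one₀ (hle1 ω x) (hnonneg ω y) (hle1 ω y))
  have hint_xM : ∀ x : α, Integrable (fun ω => ν ω x * ⨆ z, ν ω z) ℙ := fun x =>
    hintb _ ((hνx x).mul (hMmeas.comp hmeas)) fun ω => habs01 _
      (mul_nonneg (hnonneg ω x) (hMnn ω))
      (mul_le_one₀ (hle1 ω x) (hMnn ω) (hMub ω))
  -- all first moments are equal, hence each equals 1/n
  have hEx : ∀ x : α, (∫ ω, ν ω x) = 1 / Fintype.card α := by
    have heq : ∀ x y : α, (∫ ω, ν ω x) = ∫ ω, ν ω y := by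
      intro x y
      have h := hinv (Equiv.swap x y) (fun p => p y) (measurable_pi_apply y)
      simpa [Equiv.swap_apply_right] using h
    intro x
    have hsum' : ∑ y, (∫ ω, ν ω y) = 1 := by
      rw [← integral_finset_sum _ fun y _ => hint_x y]
      simp [hsum]
    have hconst : ∑ y : α, (∫ ω, ν ω y) = (Fintype.card α : ℝ) * ∫ ω, ν ω x := by
      rw [Finset.sum_congr rfl fun y _ => heq y x, Finset.sum_const, Finset.card_univ,
        nsmul_eq_mul]
    have hcard : (0:ℝ) < Fintype.card α := by positivity
    rw [eq_div_iff hcard.ne']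
    rw [hconst] at hsum'
    linarith
  -- second moments
  set m : ℝ := ∫ ω, ν ω x₀ * ν ω x₀ with hm_def
  set c : ℝ := ∫ ω, ν ω x₀ * ν ω y₀ with hc_def
  have hdiag : ∀ x : α, (∫ ω, ν ω x * ν ω x) = m := by
    intro x
    have h := hinv (Equiv.swap x x₀) (fun p => p x₀ * p x₀)
      ((measurable_pi_apply x₀).mul (measurable_pi_apply x₀))
    rw [hm_def]
    simpa [Equiv.swap_apply_right] using h
  have hpair : ∀ x y : α, x ≠ y → (∫ ω, ν ω x * ν ω y) = c := by
    intro x y hxy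
    obtain ⟨σ, hσx, hσy⟩ : ∃ σ : Equiv.Perm α, σ x₀ = x ∧ σ y₀ = y := by
      set z : α := Equiv.swap x x₀ y₀ with hz
      have hzx : z ≠ x := by
        intro h
        apply hx0y0
        have h2 : Equiv.swap x x₀ y₀ = Equiv.swap x x₀ x₀ := by
          rw [← hz, h, Equiv.swap_apply_right]
        exact ((Equiv.swap x x₀).injective h2).symm
      refine ⟨(Equiv.swap x x₀).trans (Equiv.swap z y), ?_, ?_⟩
      · simp only [Equiv.trans_apply, Equiv.swap_apply_right]
        exact Equiv.swap_apply_of_ne_of_ne (Ne.symm hzx) hxy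
      · simp only [Equiv.trans_apply, ← hz, Equiv.swap_apply_left]
    have h := hinv σ (fun p => p x₀ * p y₀)
      ((measurable_pi_apply x₀).mul (measurable_pi_apply y₀))
    simp only [Function.comp_apply, hσx, hσy] at h
    rw [hc_def]
    exact h
  have hxyval : ∀ x y : α, (∫ ω, ν ω x * ν ω y) = if x = y then m else c := by
    intro x y
    by_cases h : x = y
    · subst h; simp [hdiag x]
    · simp [h, hpair x y h]
  -- second moment of a partial sum
  have hsq : ∀ B : Finset α, (∫ ω, (∑ x ∈ B, ν ω x) ^ 2)
      = B.card * m + B.card * (B.card - 1) * c := by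
    intro B
    have h1 : (∫ ω, (∑ x ∈ B, ν ω x) ^ 2)
        = ∑ x ∈ B, ∑ y ∈ B, ∫ ω, ν ω x * ν ω y := by
      have h2 : ∀ ω, (∑ x ∈ B, ν ω x) ^ 2 = ∑ x ∈ B, ∑ y ∈ B, ν ω x * ν ω y := by
        intro ω; rw [sq, Finset.sum_mul_sum]
      simp_rw [h2]
      rw [integral_finset_sum _ fun x _ => integrable_finset_sum _ fun y _ => hint_xy x y]
      exact Finset.sum_congr rfl fun x _ =>
        integral_finset_sum _ fun y _ => hint_xy x y
    rw [h1]
    have h3 : ∀ x ∈ B, ∑ y ∈ B, (∫ ω, ν ω x * ν ω y) = m + ((B.card : ℝ) - 1) * c := by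
      intro x hx
      have h4 : ∀ y, (∫ ω, ν ω x * ν ω y) = c + (if x = y then m - c else 0) := by
        intro y; rw [hxyval]; by_cases h : x = y <;> simp [h]
      simp only [h4, Finset.sum_add_distrib, Finset.sum_const, Finset.sum_ite_eq, hx,
        if_true, smul_eq_mul, mul_one]
      ring
    rw [Finset.sum_congr rfl h3, Finset.sum_const, nsmul_eq_mul]
    ring
  -- the total second moment identity
  have huniv : (Fintype.card α : ℝ) * m
      + (Fintype.card α : ℝ) * ((Fintype.card α : ℝ) - 1) * c = 1 := by
    have h := hsq Finset.univ
    simp only [hsum, one_pow, integral_const, measure_univ, ENNReal.toReal_one, probReal_univ, smul_eq_mul,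
      one_mul, Finset.card_univ] at h
    linarith [h]
  -- bound the second moment by E[max]/n
  have hmaxeq : ∀ x : α, (∫ ω, ν ω x * ⨆ z, ν ω z)
      = (∫ ω, ν ω x₀ * ⨆ z, ν ω z) := by
    intro x
    have h := hinv (Equiv.swap x x₀) (fun p => p x₀ * ⨆ z, p z)
      ((measurable_pi_apply x₀).mul hMmeas)
    simp only [Function.comp_apply, Equiv.swap_apply_right] at h
    rw [← h]
    refine integral_congr_ae (ae_of_all _ fun ω => ?_)
    have h2 : (⨆ z, ν ω ((Equiv.swap x x₀) z)) = ⨆ z, ν ω z :=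
      (Equiv.swap x x₀).iSup_comp (g := fun z => ν ω z)
    simp only [h2]
  have hsumM : ∑ x : α, (∫ ω, ν ω x * ⨆ z, ν ω z) = ∫ ω, ⨆ z, ν ω z := by
    rw [← integral_finset_sum _ fun x _ => hint_xM x]
    refine integral_congr_ae (ae_of_all _ fun ω => ?_)
    show ∑ x : α, ν ω x * (⨆ z, ν ω z) = ⨆ z, ν ω z
    rw [← Finset.sum_mul, hsum ω, one_mul]
  have hx0M : (∫ ω, ν ω x₀ * ⨆ z, ν ω z)
      = (∫ ω, ⨆ z, ν ω z) / Fintype.card α := by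
    have hconst : ∑ x : α, (∫ ω, ν ω x * ⨆ z, ν ω z)
        = (Fintype.card α : ℝ) * ∫ ω, ν ω x₀ * ⨆ z, ν ω z := by
      rw [Finset.sum_congr rfl fun x _ => hmaxeq x, Finset.sum_const, Finset.card_univ,
        nsmul_eq_mul]
    have hcard : (0:ℝ) < Fintype.card α := by positivity
    rw [eq_div_iff hcard.ne']
    rw [hconst] at hsumM
    linarith
  have hm_le : (Fintype.card α : ℝ) * m ≤ ∫ ω, ⨆ x, ν ω x := by
    have h1 : m ≤ ∫ ω, ν ω x₀ * ⨆ z, ν ω z := by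
      refine integral_mono (hint_xy x₀ x₀) (hint_xM x₀) fun ω => ?_
      exact mul_le_mul_of_nonneg_left (hMle (ν ω) x₀) (hnonneg ω x₀)
    rw [hx0M] at h1
    have hcard : (0:ℝ) < Fintype.card α := by positivity
    rw [le_div_iff₀ hcard] at h1
    linarith
  have hmnn : 0 ≤ m := integral_nonneg fun ω => mul_nonneg (hnonneg ω x₀) (hnonneg ω x₀)
  have hcnn : 0 ≤ c := integral_nonneg fun ω => mul_nonneg (hnonneg ω x₀) (hnonneg ω y₀)
  -- Memℒp 2 for the partial sum
  have hSmeas : Measurable (fun ω => ∑ x ∈ A, ν ω x) :=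
    Finset.measurable_sum _ fun x _ => hνx x
  have hSbound : ∀ ω, |∑ x ∈ A, ν ω x| ≤ 1 := by
    intro ω
    refine habs01 _ (Finset.sum_nonneg fun x _ => hnonneg ω x) ?_
    calc ∑ x ∈ A, ν ω x ≤ ∑ x, ν ω x :=
          Finset.sum_le_sum_of_subset_of_nonneg (Finset.subset_univ A)
            (fun x _ _ => hnonneg ω x)
      _ = 1 := hsum ω
  have hSmem : MemLp (fun ω => ∑ x ∈ A, ν ω x) 2 ℙ :=
    (memLp_top_of_bound hSmeas.aestronglyMeasurable 1
      (ae_of_all _ fun ω => by simpa [Real.norm_eq_abs] using hSbound ω)).mono_exponent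
      le_top
  -- compute the variance
  have hESA : (∫ ω, ∑ x ∈ A, ν ω x) = (A.card : ℝ) / Fintype.card α := by
    rw [integral_finset_sum _ fun x _ => hint_x x]
    rw [Finset.sum_congr rfl fun x _ => hEx x, Finset.sum_const, nsmul_eq_mul]
    ring
  have hVar : variance (fun ω => ∑ x ∈ A, ν ω x) ℙ
      = (A.card : ℝ) * m + (A.card : ℝ) * ((A.card : ℝ) - 1) * c
        - ((A.card : ℝ) / Fintype.card α) ^ 2 := by
    rw [variance_eq_sub hSmem]
    have h1 : (ℙ : Measure Ω)[(fun ω => ∑ x ∈ A, ν ω x) ^ 2]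
        = ∫ ω, (∑ x ∈ A, ν ω x) ^ 2 := by
      refine integral_congr_ae (ae_of_all _ fun ω => ?_)
      simp [Pi.pow_apply]
    rw [h1, hsq A, hESA]
  rw [hVar]
  -- final algebra
  have hK1' : (1:ℝ) ≤ (A.card : ℝ) := by exact_mod_cast hK1
  have hKn' : (A.card : ℝ) ≤ (Fintype.card α : ℝ) - 1 := by
    have h9 : (A.card : ℝ) + 1 ≤ (Fintype.card α : ℝ) := by exact_mod_cast hKn
    linarith
  have hn2' : (2:ℝ) ≤ (Fintype.card α : ℝ) := by exact_mod_cast hn2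
  set K : ℝ := (A.card : ℝ) with hKdef
  set n : ℝ := (Fintype.card α : ℝ) with hndef
  set EM : ℝ := ∫ ω, ⨆ x, ν ω x with hEMdef
  have hpos : (0:ℝ) < n ^ 2 * (n - 1) := by nlinarith
  have key : (K * m + K * (K - 1) * c - (K / n) ^ 2) * (n ^ 2 * (n - 1))
      ≤ (K / n * EM) * (n ^ 2 * (n - 1)) := by
    have hn0 : n ≠ 0 := by linarith
    have e1 : (K / n) ^ 2 * (n ^ 2 * (n - 1)) = K ^ 2 * (n - 1) := by
      field_simp
    have e2 : (K / n * EM) * (n ^ 2 * (n - 1)) = K * n * (n - 1) * EM := by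
      field_simp
    rw [sub_mul, e1, e2, add_mul]
    have t1 : 0 ≤ K * n * (n - K) * (EM - n * m) :=
      mul_nonneg (mul_nonneg (mul_nonneg (by linarith) (by linarith)) (by linarith))
        (by linarith)
    have t2 : 0 ≤ K * n * EM * (K - 1) :=
      mul_nonneg (mul_nonneg (mul_nonneg (by linarith) (by linarith)) hEMnn)
        (by linarith)
    have t3 : 0 ≤ K * (n - K) := mul_nonneg (by linarith) (by linarith)
    have t4 : K * (K - 1) * n * (n * m + n * (n - 1) * c) = K * (K - 1) * n * 1 := by
      rw [huniv]
    nlinarith [t1, t2, t3, t4]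
  have := le_of_mul_le_mul_right key hpos
  linarith
end

section
/- The asymptotic bound claimed by Addario-Berry and Wen fails: there exists, for each n, an exchangeable nonnegative random vector X = (X₁,...,Xₙ) with ‖X‖₂ > 0 a.s. for which the inequality P(|Σ_{i=1}^{k}(Xᵢ − E Xᵢ)| > 2t | ‖X‖₂) ≤ 2·exp(−2t²/‖X‖₂²) is violated. Concretely, taking X = (Y,...,Y) for a nonconstant positive random variable Y, k = n, t = εn, the inequality would force 1_{|Y − E Y| > 2ε} ≤ 2·exp(−2nε²/Y²), which as n → ∞ implies Y = E[Y] almost surely, a contradiction. -/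
open MeasureTheory ProbabilityTheory

/-- Failure of the claimed concentration bound: if a positive integrable random
variable `Y` satisfied, for all `n` and all `ε > 0`, the bound
`1_{|Y − E Y| > 2ε} ≤ 2·exp(−2nε²/Y²)` (the specialization of the claimed
inequality to the exchangeable vector `X = (Y,…,Y)` with `k = n`, `t = εn`),
then `Y` would be almost surely equal to its mean. -/
theorem stmt_14 {Ω : Type*} [MeasureSpace Ω] [IsProbabilityMeasure (ℙ : Measure Ω)]
    (Y : Ω → ℝ) (hmeas : Measurable Y) (hint : Integrable Y)
    (hpos : ∀ᵐ ω, 0 < Y ω)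
    (hbound : ∀ n : ℕ, ∀ ε : ℝ, 0 < ε →
      ∀ᵐ ω, (|Y ω - ∫ x, Y x| > 2 * ε →
        (1 : ℝ) ≤ 2 * Real.exp (-(2 * (n : ℝ) * ε ^ 2) / (Y ω) ^ 2))) :
    ∀ᵐ ω, Y ω = ∫ x, Y x := by
  have h : ∀ᵐ ω, ∀ n : ℕ, ∀ q : ℚ, 0 < q →
      (|Y ω - ∫ x, Y x| > 2 * (q : ℝ) →
        (1 : ℝ) ≤ 2 * Real.exp (-(2 * (n : ℝ) * (q : ℝ) ^ 2) / (Y ω) ^ 2)) := by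
    rw [ae_all_iff]
    intro n
    rw [ae_all_iff]
    intro q
    by_cases hq : 0 < q
    · filter_upwards [hbound n q (by exact_mod_cast hq)] with ω hω
      intro _
      exact hω
    · filter_upwards with ω h'
      exact absurd h' hq
  filter_upwards [h, hpos] with ω hω hYpos
  by_contra hne
  have hd : 0 < |Y ω - ∫ x, Y x| := abs_pos.mpr (sub_ne_zero.mpr hne)
  obtain ⟨q, hq0, hq⟩ := exists_rat_btwn (by positivity : (0 : ℝ) < |Y ω - ∫ x, Y x| / 3)
  have hq0' : (0 : ℚ) < q := by exact_mod_cast hq0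
  have h2q : 2 * (q : ℝ) < |Y ω - ∫ x, Y x| := by nlinarith
  set c : ℝ := 2 * (q : ℝ) ^ 2 / (Y ω) ^ 2 with hc
  have hcpos : 0 < c := by
    have : (0 : ℝ) < (q : ℝ) := hq0
    positivity
  obtain ⟨n, hn⟩ := exists_nat_gt (Real.log 2 / c)
  have hmain := hω n q hq0' h2q
  have hkey : -(2 * (n : ℝ) * (q : ℝ) ^ 2) / (Y ω) ^ 2 = -((n : ℝ) * c) := by
    field_simp [hc]
    rw [hc]; field_simp [hYpos.ne']
  have hnc : Real.log 2 < (n : ℝ) * c := by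
    rw [div_lt_iff₀ hcpos] at hn
    linarith
  have hlt : Real.exp (-((n : ℝ) * c)) < 1 / 2 := by
    have : Real.exp (-((n : ℝ) * c)) < Real.exp (Real.log (1 / 2)) := by
      apply Real.exp_lt_exp.mpr
      rw [Real.log_div one_ne_zero (by norm_num), Real.log_one]
      linarith
    rwa [Real.exp_log (by norm_num)] at this
  rw [hkey] at hmain
  linarith
end

section
/- Discrete approximation of measures in a star decomposition: in the setting of the previous lemma (compact (Z,δ), Zₙ = Xₙ ∪ ⊔ᵢ Yₙ⁽ⁱ⁾ with sup_i diam(Yₙ⁽ⁱ⁾) → 0, points yₙ⁽ⁱ⁾ ∈ Yₙ⁽ⁱ⁾ chosen, γₙ⁽ⁱ⁾ = μₙ(Yₙ⁽ⁱ⁾ \ Xₙ), μₙˣ = μₙ(· ∩ Xₙ)), define μ̃ₙ = μₙˣ + Σᵢ γₙ⁽ⁱ⁾·δ_{yₙ⁽ⁱ⁾}. Then δ_P(μ̃ₙ, μₙ) → 0 as n → ∞. In fact, the deterministic statement holds: if sup_i diam(Yₙ⁽ⁱ⁾) ≤ ε then δ_P(μ̃ₙ, μₙ) ≤ ε. -/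
open Metric Set MeasureTheory

/-!
Both `μ̃` and `μ` split as `μ(· ∩ X)` plus pieces indexed by `i`: the atom `μ(Y⁽ⁱ⁾ \ X)·δ_{y⁽ⁱ⁾}`
in `μ̃` and the restriction `μ(· ∩ (Y⁽ⁱ⁾ \ X))` in `μ`. Each atom has the mass of the matching
piece and sits within distance `ε` of all of it, so for every `t > ε` each piece and its atom
dominate one another after `t`-thickening. Such domination survives sums, and with no additive
error it bounds the Lévy–Prokhorov distance by `ε`.
-/

section ThickeningLE

variable {Ω : Type*} [MeasurableSpace Ω]

/-- One half of the Lévy–Prokhorov condition at scale `t`, without its additive error term. -/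
def ThickeningLE [PseudoEMetricSpace Ω] (t : ℝ) (ν μ : Measure Ω) : Prop :=
  ∀ B, MeasurableSet B → ν B ≤ μ (thickening t B)

section PseudoEMetric

variable [PseudoEMetricSpace Ω] {t : ℝ}

theorem thickeningLE_self (ht : 0 < t) (μ : Measure Ω) : ThickeningLE t μ μ :=
  fun B _ => measure_mono (self_subset_thickening ht B)

theorem ThickeningLE.add {ν₁ ν₂ μ₁ μ₂ : Measure Ω} (h₁ : ThickeningLE t ν₁ μ₁)
    (h₂ : ThickeningLE t ν₂ μ₂) : ThickeningLE t (ν₁ + ν₂) (μ₁ + μ₂) :=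
  fun B hB => add_le_add (h₁ B hB) (h₂ B hB)

theorem ThickeningLE.sum {ι : Type*} {ν μ : ι → Measure Ω}
    (h : ∀ i, ThickeningLE t (ν i) (μ i)) : ThickeningLE t (Measure.sum ν) (Measure.sum μ) :=
  fun B hB => by
    rw [Measure.sum_apply _ hB]
    exact (ENNReal.tsum_le_tsum fun i => h i B hB).trans (Measure.le_sum_apply _ _)

theorem levyProkhorovDist_le_of_thickeningLE {ν μ : Measure Ω} {δ : ℝ} (hδ : 0 ≤ δ)
    (h : ∀ t, δ < t → ThickeningLE t ν μ ∧ ThickeningLE t μ ν) :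
    levyProkhorovDist ν μ ≤ δ := by
  refine ENNReal.toReal_le_of_le_ofReal hδ (levyProkhorovEDist_le_of_forall _ _ _ ?_)
  intro ε B hε hε_top hB
  have hδε : δ < ε.toReal := by
    rwa [← ENNReal.ofReal_lt_iff_lt_toReal hδ hε_top.ne]
  exact ⟨((h _ hδε).1 B hB).trans le_self_add, ((h _ hδε).2 B hB).trans le_self_add⟩

end PseudoEMetric

section PseudoMetric

variable [PseudoMetricSpace Ω] {t : ℝ} {ρ : Measure Ω} {y : Ω}

theorem thickeningLE_smul_dirac_of_ae_dist_lt (hρ : ∀ᵐ x ∂ρ, dist x y < t) :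
    ThickeningLE t (ρ univ • Measure.dirac y) ρ := by
  intro B hB
  rw [Measure.smul_apply, smul_eq_mul]
  by_cases hyB : y ∈ B
  · rw [Measure.dirac_apply_of_mem hyB, mul_one]
    exact measure_mono_ae (hρ.mono fun x hx _ => mem_thickening_iff.2 ⟨y, hyB, hx⟩)
  · simp [Measure.dirac_apply' _ hB, hyB]

theorem thickeningLE_of_ae_dist_lt_smul_dirac (hρ : ∀ᵐ x ∂ρ, dist x y < t) :
    ThickeningLE t ρ (ρ univ • Measure.dirac y) := by
  intro B _
  by_cases hy : y ∈ thickening t B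
  · rw [Measure.smul_apply, Measure.dirac_apply_of_mem hy, smul_eq_mul, mul_one]
    exact measure_mono (subset_univ B)
  · have hfar : B ⊆ {x | ¬dist x y < t} := fun x hx hxy =>
      hy (mem_thickening_iff.2 ⟨x, hx, by rwa [dist_comm]⟩)
    simp [measure_mono_null hfar (ae_iff.1 hρ)]

end PseudoMetric

end ThickeningLE

theorem MeasureTheory.Measure.eq_restrict_add_sum_restrict_diff {Z ι : Type*} [MeasurableSpace Z] [Countable ι]
    (μ : Measure Z) {X : Set Z} (hX : MeasurableSet X) {Y : ι → Set Z}
    (hY : ∀ i, MeasurableSet (Y i)) (hYdisj : Pairwise (Function.onFun Disjoint Y))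
    (hsupp : μ ((X ∪ ⋃ i, Y i)ᶜ) = 0) :
    μ = μ.restrict X + Measure.sum (fun i => μ.restrict (Y i \ X)) := by
  have hcover : X ∪ ⋃ i, Y i \ X = X ∪ ⋃ i, Y i := by
    rw [← iUnion_sdiff, union_sdiff_self]
  have hdisj : Pairwise (Function.onFun Disjoint fun i => Y i \ X) :=
    fun i j hij => (hYdisj hij).mono sdiff_subset sdiff_subset
  have hmeas : ∀ i, MeasurableSet (Y i \ X) := fun i => (hY i).diff hX
  calc μ = μ.restrict (X ∪ ⋃ i, Y i \ X) :=
        (Measure.restrict_eq_self_of_ae_mem (hcover ▸ mem_ae_iff.2 hsupp)).symm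
    _ = μ.restrict X + Measure.sum (fun i => μ.restrict (Y i \ X)) := by
      rw [Measure.restrict_union (disjoint_iUnion_right.2 fun i => disjoint_sdiff_right)
        (MeasurableSet.iUnion hmeas), Measure.restrict_iUnion hdisj hmeas]

theorem stmt_17_general {Z : Type*} [MetricSpace Z] [CompactSpace Z]
    [MeasurableSpace Z]
    (μ : Measure Z)
    (X : Set Z) (hX : MeasurableSet X)
    (Y : ℕ → Set Z) (hY : ∀ i, MeasurableSet (Y i))
    (hYdisj : Pairwise (Function.onFun Disjoint Y))
    (ε : ℝ) (hdiam : ∀ i, diam (Y i) ≤ ε)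
    (y : ℕ → Z) (hy : ∀ i, y i ∈ Y i)
    (hsupp : μ ((X ∪ ⋃ i, Y i)ᶜ) = 0) :
    levyProkhorovDist
      (μ.restrict X + Measure.sum (fun i => μ (Y i \ X) • Measure.dirac (y i))) μ
      ≤ ε := by
  have hε : 0 ≤ ε := diam_nonneg.trans (hdiam 0)
  refine levyProkhorovDist_le_of_thickeningLE hε fun t ht => ?_
  have hnear : ∀ i, ∀ᵐ x ∂μ.restrict (Y i \ X), dist x (y i) < t := fun i =>
    (ae_restrict_mem ((hY i).diff hX)).mono fun x hx =>
      ((dist_le_diam_of_mem isBounded_of_compactSpace hx.1 (hy i)).trans (hdiam i)).trans_lt ht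
  have hdecomp := Measure.eq_restrict_add_sum_restrict_diff μ hX hY hYdisj hsupp
  have hself := thickeningLE_self (hε.trans_lt ht) (μ.restrict X)
  have key := And.intro
    (hself.add (ThickeningLE.sum fun i => thickeningLE_smul_dirac_of_ae_dist_lt (hnear i)))
    (hself.add (ThickeningLE.sum fun i => thickeningLE_of_ae_dist_lt_smul_dirac (hnear i)))
  simp only [Measure.restrict_apply_univ] at key
  rwa [← hdecomp] at key

/-- Discrete approximation of a measure in a star decomposition: if `μ` is a finite
Borel measure carried by `X ∪ ⊔ᵢ Y⁽ⁱ⁾`, the `Y⁽ⁱ⁾` are pairwise disjoint Borel sets of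
diameter at most `ε` with chosen points `y⁽ⁱ⁾ ∈ Y⁽ⁱ⁾`, then the measure
`μ̃ = μ(·∩X) + Σᵢ μ(Y⁽ⁱ⁾ \ X)·δ_{y⁽ⁱ⁾}` satisfies `δ_P(μ̃, μ) ≤ ε`. -/
theorem stmt_17 {Z : Type*} [MetricSpace Z] [CompactSpace Z]
    [MeasurableSpace Z] [BorelSpace Z]
    (μ : Measure Z) [IsFiniteMeasure μ]
    (X : Set Z) (hX : MeasurableSet X)
    (Y : ℕ → Set Z) (hY : ∀ i, MeasurableSet (Y i))
    (hYdisj : Pairwise (Function.onFun Disjoint Y))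
    (ε : ℝ) (hε : 0 < ε) (hdiam : ∀ i, diam (Y i) ≤ ε)
    (y : ℕ → Z) (hy : ∀ i, y i ∈ Y i)
    (hsupp : μ ((X ∪ ⋃ i, Y i)ᶜ) = 0) :
    levyProkhorovDist
      (μ.restrict X + Measure.sum (fun i => μ (Y i \ X) • Measure.dirac (y i))) μ
      ≤ ε :=
  stmt_17_general μ X hX Y hY hYdisj ε hdiam y hy hsupp
end
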